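/- Let G be a connected simple graph on a finite vertex set V with a weight function w on its edges that is injective on the edge set of G (all edge weights distinct). Let S ⊆ V be nonempty and proper, and let e₀ be the edge of G crossing the cut (S, V∖S) of minimum weight among all crossing edges. Then every minimum-weight spanning tree of G contains e₀; that is, for every spanning tree T of G whose total edge weight is minimal among all spanning trees of G, e₀ is an edge of T. -/
import Mathlib


open scoped Classical

open SimpleGraph Finset

namespace MSTCut

variable {V : Type*}

/-- Transfer reachability along a walk given local reachability of edges. -/
lemma walk_reachable_trans {G H : SimpleGraph V}
    (h : ∀ a b : V, G.Adj a b → H.Reachable a b) :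
    ∀ {u v : V}, G.Walk u v → H.Reachable u v := by
  intro u v p
  induction p with
  | nil => exact Reachable.refl _
  | cons ha _ ih => exact (h _ _ ha).trans ih

lemma edgeFinset_sdiff_single [Fintype V] (G : SimpleGraph V) (e : Sym2 V)
    (he : e ∈ G.edgeSet) :
    (G \ SimpleGraph.fromEdgeSet {e}).edgeFinset = G.edgeFinset.erase e := by
  ext a
  simp only [mem_edgeFinset, edgeSet_sdiff, edgeSet_fromEdgeSet, Finset.mem_erase,
    Set.mem_diff, Set.mem_singleton_iff, Set.mem_setOf_eq]
  constructor
  · rintro ⟨ha, h⟩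
    refine ⟨fun hae => h ⟨hae, ?_⟩, ha⟩
    subst hae
    exact (SimpleGraph.not_isDiag_of_mem_edgeSet G ha)
  · rintro ⟨hne, ha⟩
    exact ⟨ha, fun h => hne h.1⟩

/-- Every connected graph on a finite vertex type contains a spanning tree. -/
lemma exists_spanning_tree [Fintype V] (G : SimpleGraph V) (hG : G.Connected) :
    ∃ T : SimpleGraph V, T ≤ G ∧ T.IsTree := by
  classical
  generalize hn : G.edgeSet.ncard = n
  induction n using Nat.strong_induction_on generalizing G with
  | _ n ih =>
    by_cases hac : G.IsAcyclic
    · exact ⟨G, le_refl _, ⟨hG, hac⟩⟩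
    · simp only [SimpleGraph.IsAcyclic] at hac
      push_neg at hac
      obtain ⟨x, c, hc⟩ := hac
      cases c with
      | nil => exact absurd hc (by simp [SimpleGraph.Walk.isCycle_def])
      | @cons _ y _ ha q =>
        have hedge : s(x, y) ∈ (SimpleGraph.Walk.cons ha q).edges := by
          simp [SimpleGraph.Walk.edges_cons]
        have hreach : (G \ SimpleGraph.fromEdgeSet {s(x, y)}).Reachable x y := by
          have := (SimpleGraph.adj_and_reachable_delete_edges_iff_exists_cycle
            (G := G) (v := x) (w := y)).2 ⟨x, SimpleGraph.Walk.cons ha q, hc, hedge⟩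
          exact this.2
        set G' := G \ SimpleGraph.fromEdgeSet {s(x, y)} with hG'
        have hG'conn : G'.Connected := by
          rw [SimpleGraph.connected_iff]
          refine ⟨fun u v => ?_, hG.nonempty⟩
          refine walk_reachable_trans (fun a b hab => ?_) (hG u v).some
          by_cases hab' : s(a, b) = s(x, y)
          · rw [Sym2.eq_iff] at hab'
            rcases hab' with ⟨rfl, rfl⟩ | ⟨rfl, rfl⟩
            · exact hreach
            · exact hreach.symm
          · refine SimpleGraph.Adj.reachable ?_
            rw [hG', SimpleGraph.sdiff_adj]
            refine ⟨hab, fun h => ?_⟩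
            rw [SimpleGraph.fromEdgeSet_adj] at h
            exact hab' h.1
        have hG'set : G'.edgeSet = G.edgeSet \ {s(x, y)} := by
          rw [hG', edgeSet_sdiff, edgeSet_fromEdgeSet]
          ext e
          simp only [Set.mem_diff, Set.mem_singleton_iff, Set.mem_setOf_eq]
          constructor
          · rintro ⟨he, h⟩
            exact ⟨he, fun hef => h ⟨hef, G.not_isDiag_of_mem_edgeSet he⟩⟩
          · rintro ⟨he, h⟩
            exact ⟨he, fun hh => h hh.1⟩
        have hcard : G'.edgeSet.ncard < n := by
          rw [hG'set, ← hn]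
          exact Set.ncard_diff_singleton_lt_of_mem ha (Set.toFinite _)
        obtain ⟨T, hT1, hT2⟩ := ih _ hcard G' hG'conn rfl
        exact ⟨T, le_trans hT1 sdiff_le, hT2⟩

/-- A walk with distinct edges from inside `S` to outside `S` contains a crossing
edge such that both subwalks avoid it. -/
lemma cross_lemma (T : SimpleGraph V) (S : Set V) :
    ∀ {a b : V} (p : T.Walk a b), p.edges.Nodup → a ∈ S → b ∉ S →
      ∃ x y : V, x ∈ S ∧ y ∉ S ∧ T.Adj x y ∧ s(x, y) ∈ p.edges ∧
        (T \ SimpleGraph.fromEdgeSet {s(x, y)}).Reachable a x ∧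
        (T \ SimpleGraph.fromEdgeSet {s(x, y)}).Reachable y b := by
  intro a b p
  induction p with
  | nil => intro _ ha hb; exact absurd ha hb
  | @cons a c b ha q ih =>
    intro hnd haS hbS
    simp only [SimpleGraph.Walk.edges_cons, List.nodup_cons] at hnd
    by_cases hcS : c ∈ S
    · obtain ⟨x, y, hxS, hyS, hxy, hmem, h1, h2⟩ := ih hnd.2 hcS hbS
      refine ⟨x, y, hxS, hyS, hxy, by simp [hmem], ?_, h2⟩
      have hne : s(a, c) ≠ s(x, y) := fun h => hnd.1 (h ▸ hmem)
      have hadj : (T \ SimpleGraph.fromEdgeSet {s(x, y)}).Adj a c := by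
        rw [SimpleGraph.sdiff_adj]
        refine ⟨ha, fun h => ?_⟩
        rw [SimpleGraph.fromEdgeSet_adj] at h
        exact hne h.1
      exact hadj.reachable.trans h1
    · refine ⟨a, c, haS, hcS, ha, by simp, Reachable.refl _, ?_⟩
      have hq : ∀ e ∈ q.edges, e ∈ (T \ SimpleGraph.fromEdgeSet {s(a, c)}).edgeSet := by
        intro e he
        rw [edgeSet_sdiff, edgeSet_fromEdgeSet]
        refine ⟨q.edges_subset_edgeSet he, fun h => ?_⟩
        rw [Set.mem_diff, Set.mem_singleton_iff] at h
        exact hnd.1 (h.1 ▸ he)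
      exact (q.transfer _ hq).reachable

end MSTCut

/-- Cut property: with all edge weights distinct, the minimum-weight edge
crossing a nonempty proper cut `(S, Sᶜ)` belongs to every minimum-weight
spanning tree. -/
theorem mst_cut_property {V : Type*} [Fintype V]
    (G : SimpleGraph V) (hG : G.Connected)
    (w : Sym2 V → ℝ) (hw : Set.InjOn w G.edgeSet)
    (S : Set V) (hS : S.Nonempty) (hSc : Sᶜ.Nonempty)
    (u₀ v₀ : V) (hu₀ : u₀ ∈ S) (hv₀ : v₀ ∉ S) (h₀ : G.Adj u₀ v₀)
    (hmin : ∀ u v : V, u ∈ S → v ∉ S → G.Adj u v → w s(u₀, v₀) ≤ w s(u, v))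
    (T : SimpleGraph V) (hTG : T ≤ G) (hT : T.IsTree)
    (hTmin : ∀ T' : SimpleGraph V, T' ≤ G → T'.IsTree →
      ∑ e ∈ T.edgeFinset, w e ≤ ∑ e ∈ T'.edgeFinset, w e) :
    s(u₀, v₀) ∈ T.edgeSet := by
  classical
  by_contra he₀
  -- find a crossing edge on the tree path from u₀ to v₀
  obtain ⟨p, hp⟩ : ∃ p : T.Walk u₀ v₀, p.IsPath :=
    (hT.isConnected u₀ v₀).elim_path fun p => ⟨p.1, p.2⟩
  obtain ⟨x, y, hxS, hyS, hxy, hmem, h1, h2⟩ :=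
    MSTCut.cross_lemma T S p hp.edges_nodup hu₀ hv₀
  set f : Sym2 V := s(x, y) with hf
  have hfT : f ∈ T.edgeSet := hxy
  have hne : s(u₀, v₀) ≠ f := fun h => he₀ (h ▸ hfT)
  set D : SimpleGraph V := T \ SimpleGraph.fromEdgeSet {f} with hD
  set T' : SimpleGraph V := D ⊔ SimpleGraph.fromEdgeSet {s(u₀, v₀)} with hT'
  have hfromle : SimpleGraph.fromEdgeSet {s(u₀, v₀)} ≤ G := by
    intro a b hab
    rw [SimpleGraph.fromEdgeSet_adj, Set.mem_singleton_iff, Sym2.eq_iff] at hab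
    rcases hab.1 with ⟨rfl, rfl⟩ | ⟨rfl, rfl⟩
    · exact h₀
    · exact h₀.symm
  have hT'G : T' ≤ G := sup_le (le_trans sdiff_le hTG) hfromle
  have he₀T' : T'.Adj u₀ v₀ := by
    rw [hT', SimpleGraph.sup_adj, SimpleGraph.fromEdgeSet_adj]
    exact Or.inr ⟨rfl, h₀.ne⟩
  have hDT' : D ≤ T' := le_sup_left
  -- T' is connected
  have hxyreach : T'.Reachable x y := by
    have hu₀x : T'.Reachable u₀ x := h1.mono hDT'
    have hyv₀ : T'.Reachable y v₀ := h2.mono hDT'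
    exact (hu₀x.symm.trans he₀T'.reachable).trans hyv₀.symm
  have hT'conn : T'.Connected := by
    rw [SimpleGraph.connected_iff]
    refine ⟨fun u v => ?_, hG.nonempty⟩
    refine MSTCut.walk_reachable_trans (fun a b hab => ?_) (hT.isConnected u v).some
    by_cases hab' : s(a, b) = f
    · rw [hf, Sym2.eq_iff] at hab'
      rcases hab' with ⟨rfl, rfl⟩ | ⟨rfl, rfl⟩
      · exact hxyreach
      · exact hxyreach.symm
    · refine SimpleGraph.Adj.reachable (hDT' ?_)
      rw [hD, SimpleGraph.sdiff_adj]
      refine ⟨hab, fun h => hab' ?_⟩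
      rw [SimpleGraph.fromEdgeSet_adj] at h
      simpa using h.1
  -- edge set of T'
  have hT'edge : T'.edgeFinset = insert s(u₀, v₀) (T.edgeFinset.erase f) := by
    ext e
    simp only [SimpleGraph.mem_edgeFinset, hT', SimpleGraph.edgeSet_sup, hD,
      SimpleGraph.edgeSet_sdiff, SimpleGraph.edgeSet_fromEdgeSet,
      Finset.mem_insert, Finset.mem_erase, Set.mem_union, Set.mem_diff,
      Set.mem_singleton_iff, Set.mem_setOf_eq, SimpleGraph.mem_edgeFinset]
    constructor
    · rintro (⟨he, h⟩ | ⟨he, h⟩)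
      · exact Or.inr ⟨fun hef => h ⟨hef, T.not_isDiag_of_mem_edgeSet he⟩, he⟩
      · exact Or.inl he
    · rintro (rfl | ⟨hne', he⟩)
      · exact Or.inr ⟨rfl, by simp [h₀.ne]⟩
      · exact Or.inl ⟨he, fun h => hne' h.1⟩
  have he₀nf : s(u₀, v₀) ∉ T.edgeFinset.erase f := by
    simp [SimpleGraph.mem_edgeFinset, he₀]
  have hfF : f ∈ T.edgeFinset := SimpleGraph.mem_edgeFinset.2 hfT
  have hcard : T'.edgeFinset.card = T.edgeFinset.card := by
    rw [hT'edge, Finset.card_insert_of_notMem he₀nf, Finset.card_erase_of_mem hfF]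
    have : 1 ≤ T.edgeFinset.card := Finset.card_pos.2 ⟨f, hfF⟩
    omega
  -- T' is a tree
  obtain ⟨T'', hT''le, hT''tree⟩ := MSTCut.exists_spanning_tree T' hT'conn
  have hcards : T''.edgeFinset.card = T'.edgeFinset.card := by
    have h1 := hT''tree.card_edgeFinset
    have h2 := hT.card_edgeFinset
    omega
  have hT'tree : T'.IsTree := by
    have heq : T''.edgeFinset = T'.edgeFinset :=
      Finset.eq_of_subset_of_card_le (SimpleGraph.edgeFinset_mono hT''le) hcards.ge
    rwa [SimpleGraph.edgeFinset_inj.1 heq] at hT''tree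
  -- weight comparison
  have hsum : ∑ e ∈ T'.edgeFinset, w e = w s(u₀, v₀) + (∑ e ∈ T.edgeFinset, w e - w f) := by
    rw [hT'edge, Finset.sum_insert he₀nf]
    have := Finset.sum_erase_add T.edgeFinset w hfF
    linarith [this]
  have hwlt : w s(u₀, v₀) < w f := by
    have hle := hmin x y hxS hyS (hTG hxy)
    have hne' : w s(u₀, v₀) ≠ w f := fun h => hne (hw h₀ (hTG hxy) h)
    exact lt_of_le_of_ne hle hne'
  have hle : ∑ e ∈ T.edgeFinset, w e ≤ ∑ e ∈ T'.edgeFinset, w e := by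
    have h := hTmin T' hT'G hT'tree
    convert h using 3
  rw [hsum] at hle
  linarith
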